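/- In the q-Brauer algebra, for 1 ≤ j ≤ k one has e_{(j)} g_{2j} e_{(k)} = r ((r−1)/(q−1))^{j−1} e_{(k)}. -/

import Mathlib

/-- The `q`-Brauer algebra `Br_n(r, q)` (in the sense of Wenzl): an algebra `A` over a commutative
ring `R` with invertible parameters `q`, `r` and `δ = (r−1)/(q−1)`, with generators
`g_1, …, g_{n-1}` (with inverses) and `e`, subject to the Hecke relations (H) for the `g_i`,
`(E₁)`: `e² = ((r−1)/(q−1)) e`, `(E₂)`: `e g_i = g_i e` for `i > 2`, `e g_1 = g_1 e = q e`,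
`e g_2 e = r e`, `e g_2⁻¹ e = q⁻¹ e`, and `(E₃)` involving
`e_{(2)} = e (g_2 g_3 g_1⁻¹ g_2⁻¹) e`. -/
structure QBrauer (R : Type) [CommRing R] (q r δ : Rˣ) (n : ℕ)
    (A : Type) [Ring A] [Algebra R A] where
  g : ℕ → A
  ginv : ℕ → A
  e : A
  param : ((q : R) - 1) * (δ : R) = (r : R) - 1
  mul_ginv : ∀ i, 1 ≤ i → i < n → g i * ginv i = 1
  ginv_mul : ∀ i, 1 ≤ i → i < n → ginv i * g i = 1
  braid : ∀ i, 1 ≤ i → i + 1 < n → g i * g (i+1) * g i = g (i+1) * g i * g (i+1)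
  gcomm : ∀ i j, 1 ≤ i → i + 1 < j → j < n → g i * g j = g j * g i
  quad : ∀ i, 1 ≤ i → i < n → g i * g i = ((q : R) - 1) • g i + (q : R) • (1 : A)
  esq : e * e = (δ : R) • e
  e_g : ∀ i, 2 < i → i < n → e * g i = g i * e
  e_g1 : e * g 1 = (q : R) • e
  g1_e : g 1 * e = (q : R) • e
  e_g2_e : e * g 2 * e = (r : R) • e
  e_g2inv_e : e * ginv 2 * e = ((q⁻¹ : Rˣ) : R) • e
  E3_left : 4 ≤ n →
    g 2 * g 3 * ginv 1 * ginv 2 * (e * (g 2 * g 3 * ginv 1 * ginv 2) * e)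
      = e * (g 2 * g 3 * ginv 1 * ginv 2) * e
  E3_right : 4 ≤ n →
    (e * (g 2 * g 3 * ginv 1 * ginv 2) * e) * (g 2 * g 3 * ginv 1 * ginv 2)
      = e * (g 2 * g 3 * ginv 1 * ginv 2) * e

variable {R : Type} [CommRing R] {q r δ : Rˣ} {n : ℕ} {A : Type} [Ring A] [Algebra R A]

/-- `g⁺_{l,m} = g_l g_{l+1} ⋯ g_m` (for `l ≤ m`; ascending indices). -/
def gp (b : QBrauer R q r δ n A) (l m : ℕ) : A :=
  ((List.range' l (m + 1 - l)).map b.g).prod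

/-- `g⁻_{l,m} = g_l⁻¹ g_{l+1}⁻¹ ⋯ g_m⁻¹` (for `l ≤ m`; ascending indices). -/
def gm (b : QBrauer R q r δ n A) (l m : ℕ) : A :=
  ((List.range' l (m + 1 - l)).map b.ginv).prod

/-- `g⁺_{m,l} = g_m g_{m-1} ⋯ g_l` (for `m ≥ l`; descending indices). -/
def gpd (b : QBrauer R q r δ n A) (m l : ℕ) : A :=
  (((List.range' l (m + 1 - l)).map b.g).reverse).prod

/-- `g⁻_{m,l} = g_m⁻¹ g_{m-1}⁻¹ ⋯ g_l⁻¹` (for `m ≥ l`; descending indices). -/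
def gmd (b : QBrauer R q r δ n A) (m l : ℕ) : A :=
  (((List.range' l (m + 1 - l)).map b.ginv).reverse).prod

/-- The elements `e_{(k)}`, defined inductively by `e_{(1)} = e` and
`e_{(k+1)} = e g⁺_{2,2k+1} g⁻_{1,2k} e_{(k)}`. -/
def ee (b : QBrauer R q r δ n A) : ℕ → A
  | 0 => 1
  | 1 => b.e
  | (k+2) => b.e * gp b 2 (2*(k+1)+1) * gm b 1 (2*(k+1)) * ee b (k+1)

/-!
Put `a = g₂g₃g₁⁻¹g₂⁻¹`, so that `e_{(2)} = e a e` and (E₃) reads `a e_{(2)} = e_{(2)} = e_{(2)} a`.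
The generators `g'_i = g_{i+2}` together with `e' = δ⁻¹ e_{(2)}` satisfy all defining relations of
`Br_{n-2}(r, q)`, and the elements `e'_{(k)}` they build satisfy `δ e'_{(k)} = e_{(k+1)}`. Hence
`e_{(j)} g_{2j} e_{(k)} = δ² e'_{(j-1)} g'_{2j-2} e'_{(k-1)}`, and induction on `j` reduces the
claim to `j = 1`, where it is `e g₂ e = r e`.

The substantial relation to check for the shift is `e' g'₂ e' = r e'`, that is
`e a g₄ e_{(2)} = r e_{(2)}`. Braid moves and `g₁⁻² = q⁻¹ - (1 - q⁻¹) g₁⁻¹` turn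
`D = e a g₄ e_{(2)}` into `D = q⁻¹ r g₄² e_{(2)} - (1 - q⁻¹) g₄ D`, so
`(1 + (1 - q⁻¹) g₄) D = (1 + (1 - q⁻¹) g₄) r e_{(2)}`, and `1 + (1 - q⁻¹) g₄` is invertible by the
quadratic relation. Relation (E₃) for the shift reduces to (E₃) itself because
`t = g₄g₅g₃⁻¹g₄⁻¹` satisfies `t (a t) = (a t) a`.
-/

theorem SemiconjBy.inv_right_of_mul_eq_one {M : Type*} [Monoid M] {u a a' c c' : M}
    (ha : a * a' = 1) (hc : c' * c = 1) (h : SemiconjBy u a c) : SemiconjBy u a' c' :=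
  calc u * a' = c' * c * (u * a') := by rw [hc, one_mul]
  _ = c' * (u * a * a') := by rw [h.eq]; simp only [mul_assoc]
  _ = c' * u := by rw [mul_assoc, ha, mul_one]

theorem SemiconjBy.mul_assoc_left {M : Type*} [Monoid M] {u a c : M} (h : SemiconjBy u a c)
    (x : M) : u * (a * x) = c * (u * x) := by
  rw [← mul_assoc, h.eq, mul_assoc]

theorem mul_mul_cancel_left_of_mul_eq_one {M : Type*} [Monoid M] {u v : M} (h : u * v = 1)
    (x : M) : u * (v * x) = x := by
  rw [← mul_assoc, h, one_mul]

section Braid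

variable {M : Type*} [Monoid M] {u u' v v' : M}

theorem mul_mul_inv_eq_of_braid (hu : u * u' = 1) (hv' : v' * v = 1)
    (h : u * v * u = v * u * v) : u * v * u' = v' * u * v :=
  calc u * v * u' = v' * v * (u * v) * u' := by rw [hv', one_mul]
  _ = v' * (v * u * v) * u' := by simp only [mul_assoc]
  _ = v' * (u * v * u) * u' := by rw [h]
  _ = v' * u * v := by simp only [mul_assoc, hu, mul_one]

theorem braid_inv_of_braid (hu : u * u' = 1) (hu' : u' * u = 1) (hv : v * v' = 1)
    (hv' : v' * v = 1) (h : u * v * u = v * u * v) : u' * v' * u' = v' * u' * v' :=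
  calc u' * v' * u' = u' * v' * u' * (v * u * v * (v' * u' * v')) := by
        simp only [mul_assoc, mul_mul_cancel_left_of_mul_eq_one hu,
          mul_mul_cancel_left_of_mul_eq_one hv, hv, mul_one]
  _ = v' * u' * v' := by
        rw [← h]
        simp only [mul_assoc, mul_mul_cancel_left_of_mul_eq_one hu',
          mul_mul_cancel_left_of_mul_eq_one hv']

end Braid

theorem Units.eq_inv_smul_of_smul_eq {S M : Type*} [Monoid S] [MulAction S M] {u : Sˣ} {x y : M}
    (h : (u : S) • x = y) : x = ((u⁻¹ : Sˣ) : S) • y := by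
  rw [← h, smul_smul, Units.inv_mul, one_smul]

theorem isLeftRegular_one_add_smul_of_quadratic {g : A}
    (hg : g * g = ((q : R) - 1) • g + (q : R) • (1 : A)) :
    IsLeftRegular (1 + (((q⁻¹ : Rˣ) : R) * ((q : R) - 1)) • g) := by
  set t : R := ((q⁻¹ : Rˣ) : R) * ((q : R) - 1)
  refine isLeftRegular_of_mul_eq_one (b := (1 + t * ((q : R) - 1)) • (1 : A) - t • g) ?_
  have hq : ((q⁻¹ : Rˣ) : R) * q = 1 := q.inv_mul
  simp only [sub_mul, mul_add, smul_mul_assoc, mul_smul_comm, one_mul, mul_one, hg, smul_add,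
    smul_smul]
  match_scalars
  · linear_combination (-(t * ((q : R) - 1))) * hq
  · ring

namespace QBrauer

variable {b : QBrauer R q r δ n A}

/-! ### Consequences of the Hecke and braid relations -/

theorem commute_e_ginv (i : ℕ) (h2 : 2 < i) (hn : i < n) : Commute b.e (b.ginv i) :=
  SemiconjBy.inv_right_of_mul_eq_one (b.mul_ginv i (by omega) hn) (b.ginv_mul i (by omega) hn)
    (b.e_g i h2 hn)

theorem commute_g_ginv (i j : ℕ) (h1 : 1 ≤ i) (hij : i + 1 < j) (hj : j < n) :
    Commute (b.g i) (b.ginv j) :=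
  SemiconjBy.inv_right_of_mul_eq_one (b.mul_ginv j (by omega) hj) (b.ginv_mul j (by omega) hj)
    (b.gcomm i j h1 hij hj)

theorem commute_ginv_g (i j : ℕ) (h1 : 1 ≤ i) (hij : i + 1 < j) (hj : j < n) :
    Commute (b.ginv i) (b.g j) :=
  (SemiconjBy.inv_right_of_mul_eq_one (b.mul_ginv i h1 (by omega)) (b.ginv_mul i h1 (by omega))
    (b.gcomm i j h1 hij hj).symm).symm

theorem e_g1inv (hn : 1 < n) : b.e * b.ginv 1 = ((q⁻¹ : Rˣ) : R) • b.e := by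
  refine Units.eq_inv_smul_of_smul_eq ?_
  rw [← smul_mul_assoc, ← b.e_g1, mul_assoc, b.mul_ginv 1 le_rfl hn, mul_one]

theorem g1inv_e (hn : 1 < n) : b.ginv 1 * b.e = ((q⁻¹ : Rˣ) : R) • b.e := by
  refine Units.eq_inv_smul_of_smul_eq ?_
  rw [← mul_smul_comm, ← b.g1_e, ← mul_assoc, b.ginv_mul 1 le_rfl hn, one_mul]

theorem g_mul_eq {i : ℕ} (h1 : 1 ≤ i) (hn : i < n) (x : A) :
    b.g i * x = ((q : R) - 1) • x + (q : R) • (b.ginv i * x) := by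
  have h := congrArg (· * (b.ginv i * x)) (b.quad i h1 hn)
  simp only [add_mul, smul_mul_assoc, one_mul, ← mul_assoc, b.mul_ginv i h1 hn] at h
  simpa only [mul_assoc, one_mul, b.mul_ginv i h1 hn] using h

theorem ginv_mul_eq {i : ℕ} (h1 : 1 ≤ i) (hn : i < n) (x : A) :
    b.ginv i * x
      = ((q⁻¹ : Rˣ) : R) • (b.g i * x) - (((q⁻¹ : Rˣ) : R) * ((q : R) - 1)) • x := by
  rw [g_mul_eq h1 hn, smul_add, smul_smul, smul_smul, Units.inv_mul, one_smul, add_sub_cancel_left]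

theorem g_mul_g_mul {i : ℕ} (h1 : 1 ≤ i) (hn : i < n) (x : A) :
    b.g i * (b.g i * x) = ((q : R) - 1) • (b.g i * x) + (q : R) • x := by
  rw [← mul_assoc, b.quad i h1 hn, add_mul, smul_mul_assoc, smul_mul_assoc, one_mul]

theorem ginv_mul_ginv_mul {i : ℕ} (h1 : 1 ≤ i) (hn : i < n) (x : A) :
    b.ginv i * (b.ginv i * x)
      = ((q⁻¹ : Rˣ) : R) • x - (((q⁻¹ : Rˣ) : R) * ((q : R) - 1)) • (b.ginv i * x) := by
  rw [ginv_mul_eq h1 hn (b.ginv i * x), ← mul_assoc, b.mul_ginv i h1 hn, one_mul]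

theorem braid_assoc {i j : ℕ} (hij : i + 1 = j) (h1 : 1 ≤ i) (hn : j < n) (x : A) :
    b.g i * (b.g j * (b.g i * x)) = b.g j * (b.g i * (b.g j * x)) := by
  subst hij
  simpa only [mul_assoc] using congrArg (· * x) (b.braid i h1 hn)

theorem braid_ginv {i j : ℕ} (hij : i + 1 = j) (h1 : 1 ≤ i) (hn : j < n) :
    b.ginv i * b.ginv j * b.ginv i = b.ginv j * b.ginv i * b.ginv j := by
  subst hij
  exact braid_inv_of_braid (b.mul_ginv i h1 (by omega)) (b.ginv_mul i h1 (by omega))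
    (b.mul_ginv _ (by omega) hn) (b.ginv_mul _ (by omega) hn) (b.braid i h1 hn)

theorem g_mul_g_mul_ginv_assoc {i j : ℕ} (hij : i + 1 = j) (h1 : 1 ≤ i) (hn : j < n) (x : A) :
    b.g i * (b.g j * (b.ginv i * x)) = b.ginv j * (b.g i * (b.g j * x)) := by
  subst hij
  simpa only [mul_assoc] using congrArg (· * x) <| mul_mul_inv_eq_of_braid
    (b.mul_ginv i h1 (by omega)) (b.ginv_mul _ (by omega) hn) (b.braid i h1 hn)

theorem ginv_mul_ginv_mul_g {i j : ℕ} (hij : i + 1 = j) (h1 : 1 ≤ i) (hn : j < n) :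
    b.ginv i * (b.ginv j * b.g i) = b.g j * (b.ginv i * b.ginv j) := by
  simpa only [mul_assoc] using mul_mul_inv_eq_of_braid (b.ginv_mul i h1 (by omega))
    (b.mul_ginv j (by omega) hn) (braid_ginv hij h1 hn)

theorem ginv_mul_ginv_mul_g_assoc {i j : ℕ} (hij : i + 1 = j) (h1 : 1 ≤ i) (hn : j < n)
    (x : A) : b.ginv i * (b.ginv j * (b.g i * x)) = b.g j * (b.ginv i * (b.ginv j * x)) := by
  simpa only [mul_assoc] using congrArg (· * x) (ginv_mul_ginv_mul_g hij h1 hn)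

theorem ginv_mul_ginv_mul_g_of_succ_assoc {i j : ℕ} (hij : i + 1 = j) (h1 : 1 ≤ i) (hn : j < n)
    (x : A) : b.ginv j * (b.ginv i * (b.g j * x)) = b.g i * (b.ginv j * (b.ginv i * x)) := by
  simpa only [mul_assoc] using congrArg (· * x) <| mul_mul_inv_eq_of_braid
    (b.ginv_mul j (by omega) hn) (b.mul_ginv i h1 (by omega)) (braid_ginv hij h1 hn).symm

/-! ### The elements `e_{(k)}` -/

theorem ee_add_two (k : ℕ) :
    ee b (k + 2) = b.e * gp b 2 (2 * k + 3) * gm b 1 (2 * k + 2) * ee b (k + 1) := rfl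

theorem exists_ee_eq_e_mul {k : ℕ} (hk : 1 ≤ k) : ∃ x, ee b k = b.e * x := by
  obtain ⟨k, rfl | rfl⟩ : ∃ m, k = 1 ∨ k = m + 2 := ⟨k - 2, by omega⟩
  · exact ⟨1, (mul_one _).symm⟩
  · exact ⟨gp b 2 (2 * k + 3) * gm b 1 (2 * k + 2) * ee b (k + 1), by
      rw [ee_add_two]; simp only [mul_assoc]⟩

theorem e_ee {k : ℕ} (hk : 1 ≤ k) : b.e * ee b k = (δ : R) • ee b k := by
  obtain ⟨x, hx⟩ := exists_ee_eq_e_mul (b := b) hk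
  rw [hx, ← mul_assoc, b.esq, smul_mul_assoc]

variable (b) in
def aWord : A := b.g 2 * (b.g 3 * (b.ginv 1 * b.ginv 2))

theorem aWord_mul (x : A) : b.aWord * x = b.g 2 * (b.g 3 * (b.ginv 1 * (b.ginv 2 * x))) := by
  simp only [aWord, mul_assoc]

theorem ee2_eq : ee b 2 = b.e * (b.aWord * b.e) := by
  simp [ee, gp, gm, aWord, List.range', mul_assoc]

theorem aWord_ee2 (h4 : 4 ≤ n) : b.aWord * ee b 2 = ee b 2 := by
  simpa only [ee2_eq, aWord, mul_assoc] using b.E3_left h4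

theorem ee2_aWord (h4 : 4 ≤ n) : ee b 2 * b.aWord = ee b 2 := by
  simpa only [ee2_eq, aWord, mul_assoc] using b.E3_right h4

theorem ee2_e : ee b 2 * b.e = (δ : R) • ee b 2 := by
  rw [ee2_eq, mul_assoc, mul_assoc, b.esq, mul_smul_comm, mul_smul_comm]

theorem ee2_sq (h4 : 4 ≤ n) : ee b 2 * ee b 2 = ((δ : R) * (δ : R)) • ee b 2 := by
  nth_rewrite 2 [ee2_eq]
  simp only [← mul_assoc]
  rw [ee2_e, smul_mul_assoc, smul_mul_assoc, ee2_aWord h4, ee2_e, smul_smul]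

theorem g3_aWord (h4 : 4 ≤ n) : b.g 3 * b.aWord = b.aWord * b.g 1 := by
  simp only [aWord, mul_assoc]
  rw [← braid_assoc rfl (by omega) (by omega), ← ginv_mul_ginv_mul_g rfl le_rfl (by omega)]

theorem g3_ee2 (h4 : 4 ≤ n) : b.g 3 * ee b 2 = (q : R) • ee b 2 := by
  rw [← aWord_ee2 h4, ← mul_assoc, g3_aWord h4, mul_assoc, ee2_eq, ← mul_assoc (b.g 1),
    b.g1_e, smul_mul_assoc, mul_smul_comm, ← ee2_eq]

theorem aWord_mul_inv (h4 : 4 ≤ n) :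
    b.aWord * (b.g 2 * (b.g 1 * (b.ginv 3 * b.ginv 2))) = 1 := by
  rw [aWord_mul, mul_mul_cancel_left_of_mul_eq_one (b.ginv_mul 2 (by omega) (by omega)),
    mul_mul_cancel_left_of_mul_eq_one (b.ginv_mul 1 le_rfl (by omega)),
    mul_mul_cancel_left_of_mul_eq_one (b.mul_ginv 3 (by omega) (by omega)),
    b.mul_ginv 2 (by omega) (by omega)]

theorem ee2_g3 (h4 : 4 ≤ n) : ee b 2 * b.g 3 = (q : R) • ee b 2 := by
  apply isRightRegular_of_mul_eq_one (aWord_mul_inv (b := b) h4)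
  show ee b 2 * b.g 3 * b.aWord = (q : R) • ee b 2 * b.aWord
  rw [mul_assoc, g3_aWord h4, ← mul_assoc, ee2_aWord h4, smul_mul_assoc, ee2_aWord h4, ee2_eq,
    mul_assoc, mul_assoc, b.e_g1, mul_smul_comm, mul_smul_comm]

theorem ee2_g3inv (h4 : 4 ≤ n) : ee b 2 * b.ginv 3 = ((q⁻¹ : Rˣ) : R) • ee b 2 := by
  refine Units.eq_inv_smul_of_smul_eq ?_
  rw [← smul_mul_assoc, ← ee2_g3 h4, mul_assoc, b.mul_ginv 3 (by omega) (by omega), mul_one]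

theorem g3inv_ee2 (h4 : 4 ≤ n) : b.ginv 3 * ee b 2 = ((q⁻¹ : Rˣ) : R) • ee b 2 := by
  refine Units.eq_inv_smul_of_smul_eq ?_
  rw [← mul_smul_comm, ← g3_ee2 h4, ← mul_assoc, b.ginv_mul 3 (by omega) (by omega), one_mul]

theorem commute_ee2_g {i : ℕ} (h5 : 5 ≤ i) (hi : i < n) : Commute (ee b 2) (b.g i) := by
  rw [ee2_eq, aWord]
  have ce : Commute b.e (b.g i) := b.e_g i (by omega) hi
  exact ce.mul_left <| (Commute.mul_left (b.gcomm 2 i (by omega) (by omega) hi) <|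
    Commute.mul_left (b.gcomm 3 i (by omega) (by omega) hi) <|
    (b.commute_ginv_g 1 i le_rfl (by omega) hi).mul_left
      (b.commute_ginv_g 2 i (by omega) (by omega) hi)).mul_left ce

/-! ### The contraction `e a g₄ e_{(2)} = r e_{(2)}` -/

theorem e_g2_e_assoc (x : A) : b.e * (b.g 2 * (b.e * x)) = (r : R) • (b.e * x) := by
  rw [← mul_assoc, ← mul_assoc, b.e_g2_e, smul_mul_assoc]

theorem e_g2_g3_g2inv_e_assoc (h4 : 4 ≤ n) (x : A) :
    b.e * (b.g 2 * (b.g 3 * (b.ginv 2 * (b.e * x)))) = (r : R) • (b.e * x) := by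
  have e3 : Commute b.e (b.g 3) := b.e_g 3 (by omega) (by omega)
  rw [g_mul_g_mul_ginv_assoc rfl (by omega) (by omega), ← e3.left_comm,
    (b.commute_e_ginv 3 (by omega) (by omega)).left_comm, e_g2_e_assoc,
    mul_smul_comm, e3.left_comm,
    mul_mul_cancel_left_of_mul_eq_one (b.ginv_mul 3 (by omega) (by omega))]

theorem e_g2_g3_g4_g3_g2inv_e_assoc (h5 : 5 ≤ n) (x : A) :
    b.e * (b.g 2 * (b.g 3 * (b.g 4 * (b.g 3 * (b.ginv 2 * (b.e * x))))))
      = (r : R) • (b.g 4 * (b.g 4 * (b.e * x))) := by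
  have e4 : Commute b.e (b.g 4) := b.e_g 4 (by omega) (by omega)
  have c24 : Commute (b.g 2) (b.g 4) := b.gcomm 2 4 (by omega) (by omega) (by omega)
  rw [braid_assoc rfl (by omega) (by omega),
    ← (b.commute_ginv_g 2 4 (by omega) (by omega) (by omega)).left_comm,
    ← e4.left_comm, c24.left_comm, e4.left_comm, e_g2_g3_g2inv_e_assoc (by omega), mul_smul_comm]

theorem e_g2_g3_g4_g3_g1inv_g2inv_e_assoc (h5 : 5 ≤ n) (x : A) :
    b.e * (b.g 2 * (b.g 3 * (b.g 4 * (b.g 3 * (b.ginv 1 * (b.ginv 2 * (b.e * x)))))))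
      = b.g 4 * (b.e * (b.g 2 * (b.g 3 * (b.ginv 1 * (b.ginv 2 * (b.e * (b.g 4 * x))))))) := by
  have e4 : Commute b.e (b.g 4) := b.e_g 4 (by omega) (by omega)
  have c24 : Commute (b.g 2) (b.g 4) := b.gcomm 2 4 (by omega) (by omega) (by omega)
  have cv13 := b.commute_ginv_g 1 3 le_rfl (by omega) (by omega)
  have cv14 := b.commute_ginv_g 1 4 le_rfl (by omega) (by omega)
  have cv24 := b.commute_ginv_g 2 4 (by omega) (by omega) (by omega)
  rw [← cv13.left_comm, ← cv14.left_comm, ← cv13.left_comm,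
    braid_assoc rfl (by omega) (by omega),
    ← cv24.left_comm, ← e4.left_comm, cv14.left_comm, c24.left_comm, e4.left_comm,
    cv13.left_comm]

theorem e_aWord_g4_ee2_eq (h5 : 5 ≤ n) :
    b.e * (b.aWord * (b.g 4 * ee b 2)) = b.e * (b.g 2 * (b.g 3 * (b.g 4 * (b.g 3 *
      (b.ginv 1 * (b.ginv 1 * (b.ginv 2 * ee b 2))))))) := by
  conv_lhs => rw [← aWord_ee2 (by omega)]
  rw [aWord_mul, aWord_mul,
    (b.commute_ginv_g 2 4 (by omega) (by omega) (by omega)).left_comm,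
    (b.commute_ginv_g 1 4 le_rfl (by omega) (by omega)).left_comm,
    mul_mul_cancel_left_of_mul_eq_one (b.ginv_mul 2 (by omega) (by omega)),
    (b.commute_ginv_g 1 3 le_rfl (by omega) (by omega)).left_comm]

theorem e_aWord_g4_ee2_add (h5 : 5 ≤ n) :
    b.e * (b.aWord * (b.g 4 * ee b 2))
      + (((q⁻¹ : Rˣ) : R) * ((q : R) - 1)) • (b.g 4 * (b.e * (b.aWord * (b.g 4 * ee b 2))))
      = (((q⁻¹ : Rˣ) : R) * r) • (b.g 4 * (b.g 4 * ee b 2)) := by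
  have h1 := e_g2_g3_g4_g3_g2inv_e_assoc (b := b) h5 (b.aWord * b.e)
  have h2 := e_g2_g3_g4_g3_g1inv_g2inv_e_assoc (b := b) h5 (b.aWord * b.e)
  have e4 : Commute b.e (b.g 4) := b.e_g 4 (by omega) (by omega)
  rw [← ee2_eq] at h1
  rw [e4.left_comm, ← ee2_eq, ← aWord_mul] at h2
  rw [← h2, e_aWord_g4_ee2_eq h5, ginv_mul_ginv_mul le_rfl (by omega)]
  simp only [mul_sub, mul_smul_comm]
  rw [h1, smul_smul, sub_add_cancel]

theorem e_aWord_g4_ee2 (h5 : 5 ≤ n) :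
    b.e * (b.aWord * (b.g 4 * ee b 2)) = (r : R) • ee b 2 := by
  apply isLeftRegular_one_add_smul_of_quadratic (b.quad 4 (by omega) (by omega))
  have hq : ((q⁻¹ : Rˣ) : R) * q = 1 := q.inv_mul
  simp only [add_mul, one_mul, smul_mul_assoc]
  rw [e_aWord_g4_ee2_add h5, mul_smul_comm, g_mul_g_mul (by omega) (by omega)]
  match_scalars
  · ring
  · linear_combination (r : R) * hq

/-! ### Relation (E₃) for the shifted generators -/

variable (b) in
def aWordRev : A := b.ginv 2 * (b.ginv 1 * (b.g 3 * b.g 2))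

/- Expand the outer `g₂` and `g₂⁻¹` by the quadratic relation: every term then collapses through
`e g₁^{±1} = q^{±1} e` and `e g₂⁻¹ e = q⁻¹ e`. -/
theorem e_aWordRev_e (h4 : 4 ≤ n) : b.e * (b.aWordRev * b.e) = b.e * (b.aWord * b.e) := by
  have hq : ((q⁻¹ : Rˣ) : R) * q = 1 := q.inv_mul
  have e3 : Commute b.e (b.g 3) := b.e_g 3 (by omega) (by omega)
  have e2 : b.e * (b.ginv 2 * b.e) = ((q⁻¹ : Rˣ) : R) • b.e := by
    rw [← mul_assoc, b.e_g2inv_e]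
  have e2x (x : A) : b.e * (b.ginv 2 * (b.e * x)) = ((q⁻¹ : Rˣ) : R) • (b.e * x) := by
    rw [← mul_assoc, ← mul_assoc, b.e_g2inv_e, smul_mul_assoc]
  have e1x (x : A) : b.e * (b.ginv 1 * x) = ((q⁻¹ : Rˣ) : R) • (b.e * x) := by
    rw [← mul_assoc, e_g1inv (by omega), smul_mul_assoc]
  simp only [aWordRev, aWord, mul_assoc]
  rw [(b.commute_ginv_g 1 3 le_rfl (by omega) (by omega)).left_comm,
    g_mul_eq (i := 2) (by omega) (by omega) b.e]
  simp only [mul_add, mul_smul_comm]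
  rw [g1inv_e (by omega)]
  simp only [mul_smul_comm]
  rw [← e3, e2x, ginv_mul_eq (i := 2) (by omega) (by omega)]
  simp only [mul_sub, mul_smul_comm, smul_sub, smul_smul]
  rw [e3.left_comm, e1x, e2]
  simp only [mul_smul_comm, smul_smul]
  rw [← e3]
  match_scalars
  · linear_combination (-(((q : R) - 1) * ((q⁻¹ : Rˣ) : R) ^ 2)) * hq
  · linear_combination hq

variable (b) in
def tWord : A := b.g 4 * (b.g 5 * (b.ginv 3 * b.ginv 4))

variable (b) in
def tWordRev : A := b.ginv 4 * (b.ginv 3 * (b.g 5 * b.g 4))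

variable (b) in
def atWord : A :=
  b.g 2 * (b.g 3 * (b.g 4 * (b.g 5 * (b.ginv 1 * (b.ginv 2 * (b.ginv 3 * b.ginv 4))))))

variable (b) in
def atWordRev : A :=
  b.ginv 4 * (b.ginv 3 * (b.ginv 2 * (b.ginv 1 * (b.g 5 * (b.g 4 * (b.g 3 * b.g 2))))))

theorem tWord_mul (x : A) : b.tWord * x = b.g 4 * (b.g 5 * (b.ginv 3 * (b.ginv 4 * x))) := by
  simp only [tWord, mul_assoc]

theorem aWord_mul_tWord (h6 : 6 ≤ n) : b.aWord * b.tWord = b.atWord := by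
  simp only [aWord, tWord, atWord, mul_assoc]
  rw [(b.commute_ginv_g 2 4 (by omega) (by omega) (by omega)).left_comm,
    (b.commute_ginv_g 1 4 le_rfl (by omega) (by omega)).left_comm,
    (b.commute_ginv_g 2 5 (by omega) (by omega) (by omega)).left_comm,
    (b.commute_ginv_g 1 5 le_rfl (by omega) (by omega)).left_comm]

theorem semiconjBy_atWord_g1 (h6 : 6 ≤ n) : SemiconjBy b.atWord (b.g 1) (b.g 3) := by
  have c24 : Commute (b.g 2) (b.g 4) := b.gcomm 2 4 (by omega) (by omega) (by omega)
  have c25 : Commute (b.g 2) (b.g 5) := b.gcomm 2 5 (by omega) (by omega) (by omega)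
  simp only [SemiconjBy, atWord, mul_assoc]
  rw [(b.commute_g_ginv 1 4 le_rfl (by omega) (by omega)).symm.eq,
    (b.commute_g_ginv 1 3 le_rfl (by omega) (by omega)).symm.left_comm,
    ginv_mul_ginv_mul_g_assoc rfl le_rfl (by omega), c25.symm.left_comm, c24.symm.left_comm,
    braid_assoc rfl (by omega) (by omega)]

theorem semiconjBy_atWord_g2 (h6 : 6 ≤ n) : SemiconjBy b.atWord (b.g 2) (b.g 4) := by
  have c24 : Commute (b.g 2) (b.g 4) := b.gcomm 2 4 (by omega) (by omega) (by omega)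
  have c35 : Commute (b.g 3) (b.g 5) := b.gcomm 3 5 (by omega) (by omega) (by omega)
  simp only [SemiconjBy, atWord, mul_assoc]
  rw [(b.commute_g_ginv 2 4 (by omega) (by omega) (by omega)).symm.eq,
    ginv_mul_ginv_mul_g_assoc rfl (by omega) (by omega),
    (b.commute_ginv_g 1 3 le_rfl (by omega) (by omega)).left_comm, c35.symm.left_comm,
    braid_assoc rfl (by omega) (by omega), c24.left_comm]

theorem semiconjBy_atWord_g3 (h6 : 6 ≤ n) : SemiconjBy b.atWord (b.g 3) (b.g 5) := by
  have c25 : Commute (b.g 2) (b.g 5) := b.gcomm 2 5 (by omega) (by omega) (by omega)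
  have c35 : Commute (b.g 3) (b.g 5) := b.gcomm 3 5 (by omega) (by omega) (by omega)
  simp only [SemiconjBy, atWord, mul_assoc]
  rw [ginv_mul_ginv_mul_g rfl (by omega) (by omega),
    (b.commute_ginv_g 2 4 (by omega) (by omega) (by omega)).left_comm,
    (b.commute_ginv_g 1 4 le_rfl (by omega) (by omega)).left_comm,
    braid_assoc rfl (by omega) (by omega), c35.left_comm, c25.left_comm]

theorem tWord_mul_atWord (h6 : 6 ≤ n) : b.tWord * b.atWord = b.atWord * b.aWord := by
  have s1 := (semiconjBy_atWord_g1 (b := b) h6).inv_right_of_mul_eq_one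
    (b.mul_ginv 1 le_rfl (by omega)) (b.ginv_mul 3 (by omega) (by omega))
  have s2 := (semiconjBy_atWord_g2 (b := b) h6).inv_right_of_mul_eq_one
    (b.mul_ginv 2 (by omega) (by omega)) (b.ginv_mul 4 (by omega) (by omega))
  rw [aWord, (semiconjBy_atWord_g2 h6).mul_assoc_left, (semiconjBy_atWord_g3 h6).mul_assoc_left,
    s1.mul_assoc_left, s2.eq, tWord_mul]

theorem tWordRev_mul_aWordRev (h6 : 6 ≤ n) : b.tWordRev * b.aWordRev = b.atWordRev := by
  simp only [tWordRev, aWordRev, atWordRev, mul_assoc]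
  rw [(b.commute_ginv_g 2 4 (by omega) (by omega) (by omega)).symm.left_comm,
    (b.commute_ginv_g 1 4 le_rfl (by omega) (by omega)).symm.left_comm,
    (b.commute_ginv_g 2 5 (by omega) (by omega) (by omega)).symm.left_comm,
    (b.commute_ginv_g 1 5 le_rfl (by omega) (by omega)).symm.left_comm]

theorem semiconjBy_atWordRev_g3 (h6 : 6 ≤ n) : SemiconjBy b.atWordRev (b.g 3) (b.g 1) := by
  have c24 : Commute (b.g 2) (b.g 4) := b.gcomm 2 4 (by omega) (by omega) (by omega)
  have c25 : Commute (b.g 2) (b.g 5) := b.gcomm 2 5 (by omega) (by omega) (by omega)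
  have hb : b.g 3 * (b.g 2 * b.g 3) = b.g 2 * (b.g 3 * b.g 2) := by
    simpa only [mul_one] using (b.braid_assoc rfl (by omega) (by omega) 1).symm
  simp only [SemiconjBy, atWordRev, mul_assoc]
  rw [hb, c24.symm.left_comm, c25.symm.left_comm,
    ginv_mul_ginv_mul_g_of_succ_assoc rfl le_rfl (by omega),
    (b.commute_g_ginv 1 3 le_rfl (by omega) (by omega)).symm.left_comm,
    (b.commute_g_ginv 1 4 le_rfl (by omega) (by omega)).symm.left_comm]

theorem semiconjBy_atWordRev_g4 (h6 : 6 ≤ n) : SemiconjBy b.atWordRev (b.g 4) (b.g 2) := by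
  have c24 : Commute (b.g 2) (b.g 4) := b.gcomm 2 4 (by omega) (by omega) (by omega)
  have c35 : Commute (b.g 3) (b.g 5) := b.gcomm 3 5 (by omega) (by omega) (by omega)
  simp only [SemiconjBy, atWordRev, mul_assoc]
  rw [c24.eq, ← braid_assoc rfl (by omega) (by omega), c35.symm.left_comm,
    (b.commute_ginv_g 1 3 le_rfl (by omega) (by omega)).left_comm,
    ginv_mul_ginv_mul_g_of_succ_assoc rfl (by omega) (by omega),
    (b.commute_g_ginv 2 4 (by omega) (by omega) (by omega)).symm.left_comm]

theorem semiconjBy_atWordRev_g5 (h6 : 6 ≤ n) : SemiconjBy b.atWordRev (b.g 5) (b.g 3) := by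
  have c25 : Commute (b.g 2) (b.g 5) := b.gcomm 2 5 (by omega) (by omega) (by omega)
  have c35 : Commute (b.g 3) (b.g 5) := b.gcomm 3 5 (by omega) (by omega) (by omega)
  simp only [SemiconjBy, atWordRev, mul_assoc]
  rw [c25.eq, c35.left_comm, ← braid_assoc rfl (by omega) (by omega),
    (b.commute_ginv_g 1 4 le_rfl (by omega) (by omega)).left_comm,
    (b.commute_ginv_g 2 4 (by omega) (by omega) (by omega)).left_comm,
    ginv_mul_ginv_mul_g_of_succ_assoc rfl (by omega) (by omega)]

theorem atWordRev_mul_tWord (h6 : 6 ≤ n) : b.atWordRev * b.tWord = b.aWord * b.atWordRev := by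
  have s3 := (semiconjBy_atWordRev_g3 (b := b) h6).inv_right_of_mul_eq_one
    (b.mul_ginv 3 (by omega) (by omega)) (b.ginv_mul 1 le_rfl (by omega))
  have s4 := (semiconjBy_atWordRev_g4 (b := b) h6).inv_right_of_mul_eq_one
    (b.mul_ginv 4 (by omega) (by omega)) (b.ginv_mul 2 (by omega) (by omega))
  rw [tWord, (semiconjBy_atWordRev_g4 h6).mul_assoc_left,
    (semiconjBy_atWordRev_g5 h6).mul_assoc_left, s3.mul_assoc_left, s4.eq, aWord_mul]

theorem commute_e_tWord (h6 : 6 ≤ n) : Commute b.e b.tWord :=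
  Commute.mul_right (b.e_g 4 (by omega) (by omega)) <|
    Commute.mul_right (b.e_g 5 (by omega) (by omega)) <|
    (b.commute_e_ginv 3 (by omega) (by omega)).mul_right (b.commute_e_ginv 4 (by omega) (by omega))

theorem commute_e_tWordRev (h6 : 6 ≤ n) : Commute b.e b.tWordRev :=
  (b.commute_e_ginv 4 (by omega) (by omega)).mul_right <|
    (b.commute_e_ginv 3 (by omega) (by omega)).mul_right <|
    Commute.mul_right (b.e_g 5 (by omega) (by omega)) (b.e_g 4 (by omega) (by omega))

theorem ee2_g4_ee2 (h5 : 5 ≤ n) :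
    ee b 2 * (b.g 4 * ee b 2) = ((r : R) * (δ : R)) • ee b 2 := by
  nth_rewrite 1 [ee2_eq]
  have e4 : Commute b.e (b.g 4) := b.e_g 4 (by omega) (by omega)
  rw [mul_assoc, mul_assoc, e4.left_comm, e_ee (by omega)]
  simp only [mul_smul_comm]
  rw [e_aWord_g4_ee2 h5, smul_smul, mul_comm]

theorem ee2_g4inv_ee2 (h5 : 5 ≤ n) :
    ee b 2 * (b.ginv 4 * ee b 2) = (((q⁻¹ : Rˣ) : R) * (δ : R)) • ee b 2 := by
  rw [ginv_mul_eq (by omega) (by omega), mul_sub, mul_smul_comm, mul_smul_comm, ee2_g4_ee2 h5,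
    ee2_sq (by omega), smul_smul, smul_smul]
  match_scalars
  linear_combination (-(((q⁻¹ : Rˣ) : R) * (δ : R))) * b.param

/- The computation of `e_aWordRev_e`, shifted by two, with `e_{(2)}` in the role of `e`. -/
theorem ee2_tWordRev_ee2 (h6 : 6 ≤ n) :
    ee b 2 * (b.tWordRev * ee b 2) = ee b 2 * (b.tWord * ee b 2) := by
  have hq : ((q⁻¹ : Rˣ) : R) * q = 1 := q.inv_mul
  have c5 : Commute (ee b 2) (b.g 5) := commute_ee2_g le_rfl (by omega)
  have g4inv (x : A) : ee b 2 * (b.ginv 4 * (ee b 2 * x))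
      = (((q⁻¹ : Rˣ) : R) * (δ : R)) • (ee b 2 * x) := by
    rw [← mul_assoc (b.ginv 4), ← mul_assoc, ee2_g4inv_ee2 (by omega), smul_mul_assoc]
  have g3inv (x : A) : ee b 2 * (b.ginv 3 * x) = ((q⁻¹ : Rˣ) : R) • (ee b 2 * x) := by
    rw [← mul_assoc, ee2_g3inv (by omega), smul_mul_assoc]
  simp only [tWordRev, tWord, mul_assoc]
  rw [(b.commute_ginv_g 3 5 (by omega) (by omega) (by omega)).left_comm,
    g_mul_eq (i := 4) (by omega) (by omega) (ee b 2)]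
  simp only [mul_add, mul_smul_comm]
  rw [g3inv_ee2 (by omega)]
  simp only [mul_smul_comm]
  rw [← c5.eq, g4inv, ginv_mul_eq (i := 4) (by omega) (by omega)]
  simp only [mul_sub, mul_smul_comm, smul_sub, smul_smul]
  rw [c5.left_comm, g3inv, ee2_g4inv_ee2 (by omega)]
  simp only [mul_smul_comm, smul_smul]
  rw [← c5.eq]
  match_scalars
  · linear_combination (-(((q : R) - 1) * ((q⁻¹ : Rˣ) : R) ^ 2 * (δ : R))) * hq
  · linear_combination hq

theorem ee2_tWord_ee2_eq (h6 : 6 ≤ n) :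
    ee b 2 * (b.tWord * ee b 2) = (δ : R) • (b.e * (b.atWord * ee b 2)) := by
  have et := commute_e_tWord (b := b) h6
  calc ee b 2 * (b.tWord * ee b 2)
      = b.e * (b.aWord * (b.tWord * ((b.e * b.e) * (b.aWord * b.e)))) := by
        simp only [ee2_eq, mul_assoc, et.symm.left_comm]
    _ = (δ : R) • (b.e * (b.atWord * ee b 2)) := by
        rw [b.esq, smul_mul_assoc]
        simp only [mul_smul_comm]
        rw [← mul_assoc b.aWord, aWord_mul_tWord h6, ← ee2_eq]

theorem tWord_ee2_tWord_ee2 (h6 : 6 ≤ n) :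
    b.tWord * (ee b 2 * (b.tWord * ee b 2)) = ee b 2 * (b.tWord * ee b 2) := by
  rw [ee2_tWord_ee2_eq h6, mul_smul_comm, ← mul_assoc, ← (commute_e_tWord h6).eq, mul_assoc,
    ← mul_assoc b.tWord, tWord_mul_atWord h6, mul_assoc, aWord_ee2 (by omega)]

theorem ee2_tWord_ee2_tWord (h6 : 6 ≤ n) :
    ee b 2 * (b.tWord * ee b 2) * b.tWord = ee b 2 * (b.tWord * ee b 2) := by
  have et := commute_e_tWordRev (b := b) h6
  have h : ee b 2 * (b.tWordRev * ee b 2) = (δ : R) • (ee b 2 * (b.atWordRev * b.e)) := by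
    nth_rewrite 2 [ee2_eq]
    rw [← e_aWordRev_e (by omega)]
    rw [← mul_assoc b.tWordRev, ← et.eq, mul_assoc b.e, ← mul_assoc (ee b 2), ee2_e,
      smul_mul_assoc, ← tWordRev_mul_aWordRev h6]
    simp only [mul_assoc]
  rw [← ee2_tWordRev_ee2 h6, h, smul_mul_assoc, mul_assoc, mul_assoc,
    (commute_e_tWord h6).eq, ← mul_assoc b.atWordRev, atWordRev_mul_tWord h6, ← mul_assoc,
    ← mul_assoc, ee2_aWord (by omega), mul_assoc]

/-! ### The shifted algebra -/

variable (b) in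
def shift (h5 : 5 ≤ n) : QBrauer R q r δ (n - 2) A where
  g i := b.g (i + 2)
  ginv i := b.ginv (i + 2)
  e := ((δ⁻¹ : Rˣ) : R) • ee b 2
  param := b.param
  mul_ginv i _ _ := b.mul_ginv (i + 2) (by omega) (by omega)
  ginv_mul i _ _ := b.ginv_mul (i + 2) (by omega) (by omega)
  braid i _ _ := b.braid (i + 2) (by omega) (by omega)
  gcomm i j _ _ _ := b.gcomm (i + 2) (j + 2) (by omega) (by omega) (by omega)
  quad i _ _ := b.quad (i + 2) (by omega) (by omega)
  esq := by
    simp only [smul_mul_assoc, mul_smul_comm, smul_smul, ee2_sq (show 4 ≤ n by omega)]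
    match_scalars
    linear_combination (((δ⁻¹ : Rˣ) : R) * δ) * δ.inv_mul
  e_g i _ _ := by
    simp only [smul_mul_assoc, mul_smul_comm,
      (commute_ee2_g (b := b) (i := i + 2) (by omega) (by omega)).eq]
  e_g1 := by
    simp only [Nat.reduceAdd]
    rw [smul_mul_assoc, ee2_g3 (by omega), smul_comm]
  g1_e := by
    simp only [Nat.reduceAdd]
    rw [mul_smul_comm, g3_ee2 (by omega), smul_comm]
  e_g2_e := by
    simp only [smul_mul_assoc, mul_smul_comm, smul_smul, mul_assoc,
      ee2_g4_ee2 (show 5 ≤ n by omega)]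
    match_scalars
    linear_combination ((r : R) * ((δ⁻¹ : Rˣ) : R)) * δ.inv_mul
  e_g2inv_e := by
    simp only [smul_mul_assoc, mul_smul_comm, smul_smul, mul_assoc,
      ee2_g4inv_ee2 (show 5 ≤ n by omega)]
    match_scalars
    linear_combination (((q⁻¹ : Rˣ) : R) * ((δ⁻¹ : Rˣ) : R)) * δ.inv_mul
  E3_left _ := by
    have h := tWord_ee2_tWord_ee2 (b := b) (by omega)
    simp only [tWord, mul_assoc] at h
    simp only [Nat.reduceAdd, smul_mul_assoc, mul_smul_comm, mul_assoc, h]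
  E3_right _ := by
    have h := ee2_tWord_ee2_tWord (b := b) (by omega)
    simp only [tWord, mul_assoc] at h
    simp only [Nat.reduceAdd, smul_mul_assoc, mul_smul_comm, mul_assoc, h]

theorem shift_g (h5 : 5 ≤ n) (i : ℕ) : (b.shift h5).g i = b.g (i + 2) := rfl

theorem shift_e (h5 : 5 ≤ n) : (b.shift h5).e = ((δ⁻¹ : Rˣ) : R) • ee b 2 := rfl

theorem gp_shift (h5 : 5 ≤ n) (l m : ℕ) : gp (b.shift h5) l m = gp b (l + 2) (m + 2) := by
  rw [gp, gp, show m + 2 + 1 - (l + 2) = m + 1 - l by omega, add_comm l 2,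
    ← List.map_add_range', List.map_map]
  exact congrArg List.prod <| List.map_congr_left fun i _ ↦ congrArg b.g (add_comm i 2)

theorem gm_shift (h5 : 5 ≤ n) (l m : ℕ) : gm (b.shift h5) l m = gm b (l + 2) (m + 2) := by
  rw [gm, gm, show m + 2 + 1 - (l + 2) = m + 1 - l by omega, add_comm l 2,
    ← List.map_add_range', List.map_map]
  exact congrArg List.prod <| List.map_congr_left fun i _ ↦ congrArg b.ginv (add_comm i 2)

theorem commute_e_gp {l m : ℕ} (hl : 2 < l) (hm : m < n) : Commute b.e (gp b l m) :=
  Commute.list_prod_right _ _ <| List.forall_mem_map.mpr fun i hi ↦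
    b.e_g i (by rw [List.mem_range'_1] at hi; omega) (by rw [List.mem_range'_1] at hi; omega)

theorem commute_e_gm {l m : ℕ} (hl : 2 < l) (hm : m < n) : Commute b.e (gm b l m) :=
  Commute.list_prod_right _ _ <| List.forall_mem_map.mpr fun i hi ↦
    b.commute_e_ginv i (by rw [List.mem_range'_1] at hi; omega)
      (by rw [List.mem_range'_1] at hi; omega)

theorem commute_ginv_gp {j l m : ℕ} (hj : 1 ≤ j) (hl : j + 1 < l) (hm : m < n) :
    Commute (b.ginv j) (gp b l m) :=
  Commute.list_prod_right _ _ <| List.forall_mem_map.mpr fun i hi ↦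
    b.commute_ginv_g j i hj (by rw [List.mem_range'_1] at hi; omega)
      (by rw [List.mem_range'_1] at hi; omega)

theorem aWord_mul_gp_mul_gm {l m : ℕ} (hl : 3 ≤ l) (hln : l < n) (hm : 2 ≤ m) (x : A) :
    b.aWord * (gp b 4 l * (gm b 3 m * x)) = gp b 2 l * (gm b 1 m * x) := by
  rw [aWord_mul, (commute_ginv_gp (by omega) (by omega) hln).left_comm,
    (commute_ginv_gp le_rfl (by omega) hln).left_comm]
  simp only [gp, gm, show l + 1 - 2 = l + 1 - 4 + 1 + 1 by omega,
    show m + 1 - 1 = m + 1 - 3 + 1 + 1 by omega, List.range'_succ, List.map_cons, List.prod_cons,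
    mul_assoc]

theorem smul_ee_shift (h5 : 5 ≤ n) {k : ℕ} (hk : 1 ≤ k) (hkn : 2 * (k + 1) ≤ n) :
    (δ : R) • ee (b.shift h5) k = ee b (k + 1) := by
  induction k with
  | zero => omega
  | succ k ih =>
    rcases Nat.eq_zero_or_pos k with rfl | hk
    · exact (smul_smul _ _ _).trans (by rw [Units.mul_inv, one_smul])
    obtain ⟨m, rfl⟩ : ∃ m, k = m + 1 := ⟨k - 1, by omega⟩
    have ih' : ee (b.shift h5) (m + 1) = ((δ⁻¹ : Rˣ) : R) • ee b (m + 2) :=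
      Units.eq_inv_smul_of_smul_eq (ih hk (by omega))
    rw [ee_add_two, ee_add_two, gp_shift, gm_shift, ih',
      show 2 * m + 3 + 2 = 2 * (m + 1) + 3 by ring, show 2 * m + 2 + 2 = 2 * (m + 1) + 2 by ring]
    simp only [shift_e, smul_mul_assoc, mul_smul_comm, smul_smul, mul_assoc, Nat.reduceAdd]
    rw [ee2_eq, mul_assoc, mul_assoc, (commute_e_gp (b := b) (by omega) (by omega)).left_comm,
      (commute_e_gm (b := b) (by omega) (by omega)).left_comm, e_ee (by omega)]
    simp only [mul_smul_comm, smul_smul]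
    rw [aWord_mul_gp_mul_gm (by omega) (by omega) (by omega), ← Units.val_mul, ← Units.val_mul,
      ← Units.val_mul, show δ * (δ⁻¹ * δ⁻¹) * δ = 1 by group, Units.val_one, one_smul]

theorem ee_one_g2_ee {k : ℕ} (hk : 1 ≤ k) : ee b 1 * b.g 2 * ee b k = (r : R) • ee b k := by
  obtain ⟨x, hx⟩ := exists_ee_eq_e_mul (b := b) hk
  rw [hx, ← mul_assoc, ee, b.e_g2_e, smul_mul_assoc]

end QBrauer

/-- Lemma 3.2(f): for `1 ≤ j ≤ k`, `e_{(j)} g_{2j} e_{(k)} = r ((r−1)/(q−1))^{j−1} e_{(k)}`. -/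
theorem ee_g_ee (b : QBrauer R q r δ n A) (j k : ℕ)
    (hj : 1 ≤ j) (hjk : j ≤ k) (hk : 2*k ≤ n) (hj2 : 2*j < n) :
    ee b j * b.g (2*j) * ee b k = ((r : R) * (δ : R) ^ (j-1)) • ee b k := by
  induction j generalizing n k with
  | zero => omega
  | succ i ih =>
    rcases Nat.eq_zero_or_pos i with rfl | hi
    · simpa using b.ee_one_g2_ee (by omega : 1 ≤ k)
    have h5 : 5 ≤ n := by omega
    obtain ⟨k, rfl⟩ : ∃ k', k = k' + 1 := ⟨k - 1, by omega⟩
    rw [← b.smul_ee_shift h5 hi (by omega), ← b.smul_ee_shift h5 (k := k) (by omega) (by omega),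
      show 2 * (i + 1) = 2 * i + 2 by ring, ← b.shift_g h5, smul_mul_assoc, smul_mul_assoc,
      mul_smul_comm, ih (b.shift h5) k hi (by omega) (by omega) (by omega)]
    obtain ⟨i, rfl⟩ : ∃ i', i = i' + 1 := ⟨i - 1, by omega⟩
    simp only [smul_smul, Nat.add_sub_cancel]
    ring_nf
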